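/- arXiv:1506.04851 — 2 statements merged into one kernel-verified Lean document; each statement's English description precedes it below -/
import Mathlib

section
/- Let V_0 > 2, let V_m, V_M > 0, L_1 ∈ [0, L_2), R > 0, and let V : [0,∞) → ℝ be continuous with 0 ≤ V(x) everywhere, V(x) ≥ V_m on [L_1, L_2], V(x) ≤ V_M on [0, L_2], and V_0/(1+x) ≤ V(x) ≤ V_1/(1+x) for x ≥ L_2 (with V_1 ≥ V_0). Set ε_1 = 1, ε_2 = V_0/2, ε_3 = 2V_0, k = 4V_0 V*/(V_0−2) where V* = max{(1+L_2)V_M, V_1}, f(t)=ε_1(1+t)^2, g(t)=ε_2(1+t), h(t,x)=ε_3(1+t)φ(x), where φ is smooth nondecreasing with φ(x)=1+x on [0,L_1] and φ(x)=1+L_2 for x ≥ L_2. Then there exists t_0 > 0 such that for all t ≥ t_0 and all x ∈ [0, R+t]: 2f(t)V(x) − f'(t) − 2g(t) + (∂_x h)(t,x) − k·h(t,x)V(x) − (∂_t h)(t,x) > 0. -/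
/-!
Write `s = 1 + t` and `A = k V₀ (1 + L₂)`. Monotonicity of `φ` gives `φ ≤ 1 + L₂`, so for `s ≥ A`
the expression is at least `2sV(s − A) − (2 + V₀)s + 2V₀sφ' − 2V₀(1 + L₂)`, which is eventually
positive in each region separately. On `[0, L₁)` we have `φ' = 1` and the linear term `(V₀ − 2)s`
wins. On `[L₁, L₂]` we have `V ≥ V_m`, and the quadratic term `2sV_m(s − A)` wins. Beyond `L₂`,
the constraint `x ≤ R + t` gives `V ≥ V₀/(s + R)`, so `2sV(s − A) ≈ 2V₀s`, which beats
`(2 + V₀)s` exactly because `V₀ > 2`.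
-/

open Set Filter

/-- The left-hand side `2fV − f' − 2g + ∂ₓh − khV − ∂ₜh` of the inequality, written in terms of
`s = 1 + t`, `v = V x`, `p = φ x` and `p' = φ' x`. -/
noncomputable def energyCoeff (V0 K s v p p' : ℝ) : ℝ :=
  2 * s ^ 2 * v - 2 * s - 2 * (V0 / 2 * s) + 2 * V0 * s * p' - K * (2 * V0 * s * p) * v
    - 2 * V0 * p

section energyCoeff

variable {V0 K P s v p p' : ℝ}

lemma energyCoeff_ge (hV0 : 0 ≤ V0) (hK : 0 ≤ K) (hs : 0 ≤ s) (hv : 0 ≤ v) (hp : p ≤ P) :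
    2 * s * v * (s - K * V0 * P) - (2 + V0) * s + 2 * V0 * s * p' - 2 * V0 * P
      ≤ energyCoeff V0 K s v p p' := by
  have hKp : K * V0 * p ≤ K * V0 * P := mul_le_mul_of_nonneg_left hp (by positivity)
  unfold energyCoeff
  nlinarith [mul_nonneg (mul_nonneg hs hv) (sub_nonneg.2 hKp)]

lemma eventually_energyCoeff_pos_of_deriv_eq_one (hV0 : 2 < V0) (hK : 0 ≤ K) :
    ∀ᶠ s in atTop, ∀ v p, 0 ≤ v → p ≤ P → 0 < energyCoeff V0 K s v p 1 := by
  filter_upwards [eventually_ge_atTop 0, eventually_ge_atTop (K * V0 * P),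
    eventually_gt_atTop (2 * V0 * P / (V0 - 2))] with s hs hsP hs' v p hv hp
  have hlin : 2 * V0 * P < (V0 - 2) * s := by rwa [div_lt_iff₀' (by linarith)] at hs'
  nlinarith [energyCoeff_ge (p' := 1) (zero_le_two.trans hV0.le) hK hs hv hp,
    mul_nonneg (mul_nonneg hs hv) (sub_nonneg.2 hsP)]

lemma eventually_energyCoeff_pos_of_const_le (hV0 : 2 < V0) (hK : 0 ≤ K) (hP : 0 ≤ P) {Vm : ℝ}
    (hVm : 0 < Vm) :
    ∀ᶠ s in atTop, ∀ v p p', Vm ≤ v → p ≤ P → 0 ≤ p' → 0 < energyCoeff V0 K s v p p' := by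
  filter_upwards [eventually_ge_atTop 1, eventually_ge_atTop (K * V0 * P),
    eventually_gt_atTop (K * V0 * P + ((2 + V0) + 2 * V0 * P) / (2 * Vm))]
    with s hs hsP hs' v p p' hv hp hp'
  have hgap : (2 + V0) + 2 * V0 * P < 2 * Vm * (s - K * V0 * P) := by
    rw [← div_lt_iff₀' (by positivity)]; linarith
  have hs0 : 0 ≤ s := by linarith
  have hquad : s * ((2 + V0) + 2 * V0 * P) < 2 * s * v * (s - K * V0 * P) :=
    calc s * ((2 + V0) + 2 * V0 * P) < s * (2 * Vm * (s - K * V0 * P)) :=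
          mul_lt_mul_of_pos_left hgap (by linarith)
      _ ≤ 2 * s * v * (s - K * V0 * P) := by
          nlinarith [mul_nonneg (mul_nonneg hs0 (sub_nonneg.2 hv)) (sub_nonneg.2 hsP)]
  nlinarith [energyCoeff_ge (p' := p') (zero_le_two.trans hV0.le) hK hs0 (hVm.le.trans hv) hp,
    mul_nonneg (mul_nonneg (by linarith : (0:ℝ) ≤ V0) hs0) hp',
    mul_nonneg (by positivity : (0:ℝ) ≤ 2 * V0 * P) (by linarith : (0:ℝ) ≤ s - 1)]

lemma eventually_energyCoeff_pos_of_div_le (hV0 : 2 < V0) (hK : 0 ≤ K) (hP : 0 ≤ P) {R : ℝ}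
    (hR : 0 ≤ R) :
    ∀ᶠ s in atTop, ∀ v p p', V0 / (s + R) ≤ v → p ≤ P → 0 ≤ p' →
      0 < energyCoeff V0 K s v p p' := by
  set B := 2 * V0 * (K * V0 * P) + (2 + V0) * R + 2 * V0 * P + 2 * V0 * P * R
  filter_upwards [eventually_ge_atTop 1, eventually_ge_atTop (K * V0 * P),
    eventually_gt_atTop (B / (V0 - 2))] with s hs hsP hsB v p p' hv hp hp'
  have hs0 : 0 ≤ s := by linarith
  have hsR : 0 < s + R := by linarith
  have hV0v : V0 ≤ v * (s + R) := (div_le_iff₀ hsR).1 hv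
  have hv0 : 0 ≤ v := (div_nonneg (by linarith) hsR.le).trans hv
  have hB : B < (V0 - 2) * s := by rwa [div_lt_iff₀' (by linarith)] at hsB
  have hquad : ((2 + V0) * s + 2 * V0 * P) * (s + R) < 2 * s * (s - K * V0 * P) * V0 := by
    nlinarith [mul_lt_mul_of_pos_right hB (by linarith : (0:ℝ) < s),
      mul_nonneg (by positivity : (0:ℝ) ≤ 2 * V0 * P * R) (by linarith : (0:ℝ) ≤ s - 1)]
  have hdecay : (2 + V0) * s + 2 * V0 * P < 2 * s * v * (s - K * V0 * P) := by
    refine lt_of_mul_lt_mul_right (hquad.trans_le ?_) hsR.le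
    nlinarith [mul_le_mul_of_nonneg_left hV0v
      (mul_nonneg (mul_nonneg zero_le_two hs0) (sub_nonneg.2 hsP))]
  nlinarith [energyCoeff_ge (p' := p') (zero_le_two.trans hV0.le) hK hs0 hv0 hp,
    mul_nonneg (mul_nonneg (by linarith : (0:ℝ) ≤ V0) hs0) hp']

end energyCoeff

lemma HasDerivAt.eq_one_of_eqOn_Ico {f : ℝ → ℝ} {f' c x b : ℝ} (hf : HasDerivAt f f' x)
    (hxb : x < b) (heq : EqOn f (fun y => c + y) (Ico x b)) : f' = 1 :=
  (uniqueDiffWithinAt_Ici x).eq_deriv _ hf.hasDerivWithinAt <|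
    ((hasDerivAt_id' x).const_add c).hasDerivWithinAt.congr_of_eventuallyEq
      (eventually_of_mem (Ico_mem_nhdsGE hxb) heq) (heq ⟨le_rfl, hxb⟩)

lemma monotoneOn_Ici_of_hasDerivAt_nonneg {f f' : ℝ → ℝ} {a : ℝ}
    (hf : ∀ x, HasDerivAt f (f' x) x) (hf' : ∀ x ≥ a, 0 ≤ f' x) : MonotoneOn f (Ici a) :=
  monotoneOn_of_hasDerivWithinAt_nonneg (convex_Ici a)
    (fun x _ => (hf x).continuousAt.continuousWithinAt) (fun x _ => (hf x).hasDerivWithinAt)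
    (fun x hx => hf' x (interior_subset hx))

lemma MonotoneOn.le_of_forall_ge_eq {f : ℝ → ℝ} {a b c : ℝ} (hf : MonotoneOn f (Ici a))
    (hab : a ≤ b) (hc : ∀ x ≥ b, f x = c) {x : ℝ} (hx : a ≤ x) : f x ≤ c := by
  rcases le_total x b with hxb | hbx
  · exact (hf hx hab hxb).trans (hc b le_rfl).le
  · exact (hc x hbx).le

theorem stmt_12_general (V0 Vm VM V1 L1 L2 R : ℝ) (V φ φ' : ℝ → ℝ)
    (hV0 : V0 > 2) (hVm : Vm > 0) (hV1 : V1 ≥ V0)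
    (hL1 : 0 ≤ L1) (hL12 : L1 < L2) (hR : R > 0)
    (hVpos : ∀ x ≥ (0:ℝ), 0 ≤ V x)
    (hVlow : ∀ x ∈ Icc L1 L2, Vm ≤ V x)
    (hVinf : ∀ x ≥ L2, V0 / (1 + x) ≤ V x ∧ V x ≤ V1 / (1 + x))
    (hφderiv : ∀ x, HasDerivAt φ (φ' x) x)
    (hφ'pos : ∀ x ≥ (0:ℝ), 0 ≤ φ' x)
    (hφ1 : ∀ x ∈ Icc (0:ℝ) L1, φ x = 1 + x)
    (hφ2 : ∀ x ≥ L2, φ x = 1 + L2) :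
    ∃ t0 > (0:ℝ), ∀ t ≥ t0, ∀ x, 0 ≤ x → x ≤ R + t →
      2 * ((1 + t)^2) * V x - 2 * (1 + t) - 2 * (V0 / 2 * (1 + t))
        + 2 * V0 * (1 + t) * φ' x
        - (4 * V0 * max ((1 + L2) * VM) V1 / (V0 - 2)) * (2 * V0 * (1 + t) * φ x) * V x
        - 2 * V0 * φ x > 0 := by
  set K := 4 * V0 * max ((1 + L2) * VM) V1 / (V0 - 2)
  have hK : 0 ≤ K := by
    have : V0 ≤ max ((1 + L2) * VM) V1 := hV1.trans (le_max_right _ _)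
    exact div_nonneg (by nlinarith) (by linarith)
  have hL2 : 0 ≤ L2 := hL1.trans hL12.le
  have hP : 0 ≤ 1 + L2 := by linarith
  have hφle : ∀ x ≥ (0:ℝ), φ x ≤ 1 + L2 := fun x =>
    (monotoneOn_Ici_of_hasDerivAt_nonneg hφderiv hφ'pos).le_of_forall_ge_eq hL2 hφ2
  obtain ⟨s0, hs0⟩ := eventually_atTop.1 <|
    (eventually_energyCoeff_pos_of_deriv_eq_one (P := 1 + L2) hV0 hK).and <|
      (eventually_energyCoeff_pos_of_const_le hV0 hK hP hVm).and
        (eventually_energyCoeff_pos_of_div_le hV0 hK hP hR.le)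
  refine ⟨max s0 1, lt_max_of_lt_right one_pos, fun t ht x hx0 hxR => ?_⟩
  obtain ⟨hslope, hbulk, htail⟩ := hs0 (1 + t) (by linarith [le_max_left s0 1])
  show 0 < energyCoeff V0 K (1 + t) (V x) (φ x) (φ' x)
  rcases lt_or_ge x L1 with hx1 | hx1
  · rw [(hφderiv x).eq_one_of_eqOn_Ico hx1 fun y hy => hφ1 y ⟨hx0.trans hy.1, hy.2.le⟩]
    exact hslope _ _ (hVpos x hx0) (hφle x hx0)
  rcases le_or_gt x L2 with hx2 | hx2
  · exact hbulk _ _ _ (hVlow x ⟨hx1, hx2⟩) (hφle x hx0) (hφ'pos x hx0)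
  · refine htail _ _ _ ?_ (hφle x hx0) (hφ'pos x hx0)
    calc V0 / (1 + t + R) ≤ V0 / (1 + x) :=
          div_le_div_of_nonneg_left (by linarith) (by linarith) (by linarith)
      _ ≤ V x := (hVinf x hx2.le).1

/-- Lemma 2.4(iii): with `ε₁=1, ε₂=V₀/2, ε₃=2V₀, k=4V₀V*/(V₀−2)`,
`f(t)=(1+t)², g(t)=(V₀/2)(1+t), h(t,x)=2V₀(1+t)φ(x)`, for large `t` and
`0 ≤ x ≤ R+t` one has `2fV − f' − 2g + h_x − khV − h_t > 0`. -/
theorem stmt_12 (V0 Vm VM V1 L1 L2 R : ℝ) (V φ φ' : ℝ → ℝ)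
    (hV0 : V0 > 2) (hVm : Vm > 0) (hVM : VM > 0) (hV1 : V1 ≥ V0)
    (hL1 : 0 ≤ L1) (hL12 : L1 < L2) (hR : R > 0)
    (hVcont : ContinuousOn V (Ici 0))
    (hVpos : ∀ x ≥ (0:ℝ), 0 ≤ V x)
    (hVlow : ∀ x ∈ Icc L1 L2, Vm ≤ V x)
    (hVup : ∀ x ∈ Icc (0:ℝ) L2, V x ≤ VM)
    (hVinf : ∀ x ≥ L2, V0 / (1 + x) ≤ V x ∧ V x ≤ V1 / (1 + x))
    (hφderiv : ∀ x, HasDerivAt φ (φ' x) x)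
    (hφ'pos : ∀ x ≥ (0:ℝ), 0 ≤ φ' x)
    (hφ1 : ∀ x ∈ Icc (0:ℝ) L1, φ x = 1 + x)
    (hφ2 : ∀ x ≥ L2, φ x = 1 + L2) :
    ∃ t0 > (0:ℝ), ∀ t ≥ t0, ∀ x, 0 ≤ x → x ≤ R + t →
      2 * ((1 + t)^2) * V x - 2 * (1 + t) - 2 * (V0 / 2 * (1 + t))
        + 2 * V0 * (1 + t) * φ' x
        - (4 * V0 * max ((1 + L2) * VM) V1 / (V0 - 2)) * (2 * V0 * (1 + t) * φ x) * V x
        - 2 * V0 * φ x > 0 :=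
  stmt_12_general V0 Vm VM V1 L1 L2 R V φ φ' hV0 hVm hV1 hL1 hL12 hR hVpos hVlow hVinf hφderiv
    hφ'pos hφ1 hφ2
end

section
/- With the same notation and hypotheses as in the previous statement (V_0 > 2, ε_1 = 1, ε_2 = V_0/2, ε_3 = 2V_0, k = 4V_0V*/(V_0−2), V* = max{(1+L_2)V_M, V_1}, f(t)=ε_1(1+t)^2, g(t)=ε_2(1+t), h(t,x)=ε_3(1+t)φ(x)), there exists t_0 > 0 such that for all t ≥ t_0 and all x ∈ [0,∞): 2g(t) − f'(t) + (∂_x h)(t,x) − (1/k)h(t,x)V(x) − (∂_t h)(t,x) > 0. -/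
/-!
On `[0, L₂]` the weight satisfies `φ ≤ 1 + L₂` (it is nondecreasing and equals `1 + L₂` from `L₂`
on), and beyond `L₂` the decay `V x ≤ V₁ / (1 + x)` takes over; hence `φ V ≤ V*` everywhere. With
`k = 4 V₀ V* / (V₀ - 2)` the potential term is then at most `(V₀ - 2)/2 · (1 + t)`, which leaves
`(V₀ - 2)/2 · (1 + t) - 2 V₀ (1 + L₂)` as a lower bound, positive once `t ≥ 4 V₀ (1 + L₂) / (V₀ - 2)`.
-/

open Set

lemma le_of_monotoneOn_Ici_of_eq_of_ge {φ : ℝ → ℝ} {a b c x : ℝ}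
    (hmono : MonotoneOn φ (Ici a)) (hconst : ∀ y ≥ b, φ y = c) (hx : a ≤ x) : φ x ≤ c := by
  rcases le_or_gt x b with hxb | hbx
  · calc φ x ≤ φ b := hmono hx (hx.trans hxb) hxb
      _ = c := hconst b le_rfl
  · exact (hconst x hbx.le).le

lemma mul_le_max_of_bounded_of_decay {φ V : ℝ → ℝ} {L VM V1 x : ℝ} (hL : 0 ≤ L) (hV1 : 0 ≤ V1)
    (hVpos : 0 ≤ V x) (hφle : φ x ≤ 1 + L) (hφconst : L < x → φ x = 1 + L)
    (hVup : x ≤ L → V x ≤ VM) (hVdecay : L < x → V x ≤ V1 / (1 + x)) :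
    φ x * V x ≤ max ((1 + L) * VM) V1 := by
  rcases le_or_gt x L with hxL | hLx
  · calc φ x * V x ≤ (1 + L) * V x := mul_le_mul_of_nonneg_right hφle hVpos
      _ ≤ (1 + L) * VM := mul_le_mul_of_nonneg_left (hVup hxL) (by linarith)
      _ ≤ _ := le_max_left _ _
  · have hx1 : 0 < 1 + x := by linarith
    calc φ x * V x ≤ (1 + L) * (V1 / (1 + x)) := by
          rw [hφconst hLx]; exact mul_le_mul_of_nonneg_left (hVdecay hLx) (by linarith)
      _ ≤ V1 := by
          rw [← mul_div_assoc, div_le_iff₀ hx1]; nlinarith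
      _ ≤ _ := le_max_right _ _

/-- The paper's condition `2ε₂ - 2ε₁ - (ε₃/k) V* = (V₀ - 2)/2`, with `s = 1 + t` and `a b = φ V`. -/
lemma one_div_mul_le_of_mul_le {V0 Vs s a b : ℝ} (hV0 : 2 < V0) (hVs : 0 < Vs) (hs : 0 ≤ s)
    (hab : a * b ≤ Vs) :
    1 / (4 * V0 * Vs / (V0 - 2)) * (2 * V0 * s * a) * b ≤ (V0 - 2) / 2 * s := by
  have hc : 0 ≤ (V0 - 2) * s / (2 * Vs) := div_nonneg (by nlinarith) (by linarith)
  calc 1 / (4 * V0 * Vs / (V0 - 2)) * (2 * V0 * s * a) * b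
      = (V0 - 2) * s / (2 * Vs) * (a * b) := by
        field_simp; ring
    _ ≤ (V0 - 2) * s / (2 * Vs) * Vs := mul_le_mul_of_nonneg_left hab hc
    _ = (V0 - 2) / 2 * s := by field_simp

theorem stmt_13_general (V0 VM V1 L1 L2 : ℝ) (V φ φ' : ℝ → ℝ)
    (hV0 : V0 > 2) (hV1 : V1 ≥ V0)
    (hL1 : 0 ≤ L1) (hL12 : L1 < L2)
    (hVpos : ∀ x ≥ (0:ℝ), 0 ≤ V x)
    (hVup : ∀ x ∈ Icc (0:ℝ) L2, V x ≤ VM)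
    (hVinf : ∀ x ≥ L2, V0 / (1 + x) ≤ V x ∧ V x ≤ V1 / (1 + x))
    (hφderiv : ∀ x, HasDerivAt φ (φ' x) x)
    (hφ'pos : ∀ x ≥ (0:ℝ), 0 ≤ φ' x)
    (hφ2 : ∀ x ≥ L2, φ x = 1 + L2) :
    ∃ t0 > (0:ℝ), ∀ t ≥ t0, ∀ x ≥ (0:ℝ),
      2 * (V0 / 2 * (1 + t)) - 2 * (1 + t)
        + 2 * V0 * (1 + t) * φ' x
        - (1 / (4 * V0 * max ((1 + L2) * VM) V1 / (V0 - 2)))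
            * (2 * V0 * (1 + t) * φ x) * V x
        - 2 * V0 * φ x > 0 := by
  have hmono : MonotoneOn φ (Ici 0) :=
    monotoneOn_of_hasDerivWithinAt_nonneg (convex_Ici 0)
      (fun x _ ↦ (hφderiv x).continuousAt.continuousWithinAt)
      (fun x _ ↦ (hφderiv x).hasDerivWithinAt)
      (fun x hx ↦ hφ'pos x (interior_subset hx))
  have hφle : ∀ x ≥ (0:ℝ), φ x ≤ 1 + L2 := fun x hx ↦
    le_of_monotoneOn_Ici_of_eq_of_ge hmono hφ2 hx
  have hVs : 0 < max ((1 + L2) * VM) V1 := lt_max_of_lt_right (by linarith)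
  have ht0 : 0 < 4 * V0 * (1 + L2) / (V0 - 2) := div_pos (by nlinarith) (by linarith)
  refine ⟨_, ht0, fun t ht x hx ↦ ?_⟩
  have hpot := one_div_mul_le_of_mul_le (s := 1 + t) (a := φ x) (b := V x) hV0 hVs (by linarith)
    (mul_le_max_of_bounded_of_decay (by linarith) (by linarith) (hVpos x hx) (hφle x hx)
      (fun h ↦ hφ2 x h.le) (fun h ↦ hVup x ⟨hx, h⟩) (fun h ↦ (hVinf x h.le).2))
  have hφ' : 0 ≤ 2 * V0 * (1 + t) * φ' x := mul_nonneg (by nlinarith) (hφ'pos x hx)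
  have hlarge : 4 * V0 * (1 + L2) < (V0 - 2) * (1 + t) := by
    rw [ge_iff_le, div_le_iff₀ (by linarith)] at ht; nlinarith
  nlinarith [hφle x hx]

/-- Lemma 2.4(iv): with the same parameter choices, for large `t` and all `x ≥ 0`,
`2g − f' + h_x − (1/k)hV − h_t > 0`. -/
theorem stmt_13 (V0 Vm VM V1 L1 L2 : ℝ) (V φ φ' : ℝ → ℝ)
    (hV0 : V0 > 2) (hVm : Vm > 0) (hVM : VM > 0) (hV1 : V1 ≥ V0)
    (hL1 : 0 ≤ L1) (hL12 : L1 < L2)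
    (hVcont : ContinuousOn V (Ici 0))
    (hVpos : ∀ x ≥ (0:ℝ), 0 ≤ V x)
    (hVlow : ∀ x ∈ Icc L1 L2, Vm ≤ V x)
    (hVup : ∀ x ∈ Icc (0:ℝ) L2, V x ≤ VM)
    (hVinf : ∀ x ≥ L2, V0 / (1 + x) ≤ V x ∧ V x ≤ V1 / (1 + x))
    (hφderiv : ∀ x, HasDerivAt φ (φ' x) x)
    (hφ'pos : ∀ x ≥ (0:ℝ), 0 ≤ φ' x)
    (hφ1 : ∀ x ∈ Icc (0:ℝ) L1, φ x = 1 + x)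
    (hφ2 : ∀ x ≥ L2, φ x = 1 + L2) :
    ∃ t0 > (0:ℝ), ∀ t ≥ t0, ∀ x ≥ (0:ℝ),
      2 * (V0 / 2 * (1 + t)) - 2 * (1 + t)
        + 2 * V0 * (1 + t) * φ' x
        - (1 / (4 * V0 * max ((1 + L2) * VM) V1 / (V0 - 2)))
            * (2 * V0 * (1 + t) * φ x) * V x
        - 2 * V0 * φ x > 0 :=
  stmt_13_general V0 VM V1 L1 L2 V φ φ' hV0 hV1 hL1 hL12 hVpos hVup hVinf hφderiv hφ'pos hφ2
end
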